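/- Let α₁,…,αₙ ∈ ℂ be distinct with Re α_j < 0, r > 1, and f : [0,∞) → ℂ continuous and bounded. Define φₙ by the recursion φ₀ = f, φ_j(t) = φ_{j−1}(t) + (1−1/r)α_j ∫₀ᵗ e^{α_j(t−τ)}φ_{j−1}(τ)dτ. Then φₙ(t) = f(t) + ∑_{j=1}^n a_j(r) ∫₀ᵗ e^{α_j(t−τ)} f(τ) dτ, where a_j(r) = (∏ₖ(α_j − αₖ/r))/(∏_{k≠j}(α_j − αₖ)). -/

import Mathlib

open Complex Finset

/-!
Write `K_β f t = ∫₀ᵗ e^{β(t-τ)} f τ dτ`. It is the solution of `y' = β y + f`, `y 0 = 0`, so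
uniqueness for this linear ODE gives the resolvent identity `K_β K_γ = (K_β - K_γ) / (β - γ)` for
`β ≠ γ`. The recursion reads `φ_{m+1} = φ_m + c_m K_{α_m} φ_m` with `c_m = (1 - 1/r) α_m`, so by
induction and the resolvent identity `φ_m` stays of the form `f + ∑_{j<m} A_j K_{α_j} f`. The
old coefficients pick up the factor `(α_j - α_m/r) / (α_j - α_m)`, and the new one is
`c_m (1 + ∑_{j<m} A_j / (α_m - α_j))`; that this equals the claimed coefficient is the partial
fraction expansion of `∏_{k<m} (x - α_k/r) / ∏_{k<m} (x - α_k)` at `x = α_m`, which follows from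
Lagrange interpolation of the difference of numerator and denominator (a polynomial of degree `< m`).
-/

section PartialFractions

open Polynomial Lagrange

variable {F ι : Type*} [Field F] [DecidableEq ι]

noncomputable def partialFractionCoeff (s : Finset ι) (v c : ι → F) (j : ι) : F :=
  (∏ k ∈ s, (v j - c k)) / ∏ k ∈ s.erase j, (v j - v k)

theorem prod_sub_div_prod_sub_eq_one_add_sum {s : Finset ι} {v : ι → F} (hv : Set.InjOn v s)
    (c : ι → F) {x : F} (hx : ∀ i ∈ s, x ≠ v i) :
    (∏ k ∈ s, (x - c k)) / ∏ k ∈ s, (x - v k) =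
      1 + ∑ j ∈ s, partialFractionCoeff s v c j / (x - v j) := by
  have hdeg : (nodal s c - nodal s v).degree < #s := by
    rw [← degree_nodal (v := c)]
    exact degree_sub_lt_left (by rw [degree_nodal, degree_nodal]) nodal_ne_zero
      (by rw [nodal_monic.leadingCoeff, nodal_monic.leadingCoeff])
  have hinterp := congrArg (eval x) (eq_interpolate hv hdeg)
  rw [eval_interpolate_not_at_node _ hx] at hinterp
  have hQ : ∏ k ∈ s, (x - v k) ≠ 0 := prod_ne_zero_iff.mpr fun k hk => sub_ne_zero.mpr (hx k hk)
  rw [div_eq_iff hQ, ← eval_nodal, ← eval_nodal, add_mul, one_mul, ← sub_eq_iff_eq_add',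
    ← eval_sub, hinterp, mul_comm]
  refine congrArg (· * _) (sum_congr rfl fun j hj => ?_)
  rw [eval_sub, eval_nodal_at_node hj, sub_zero, eval_nodal, partialFractionCoeff, nodalWeight,
    prod_inv_distrib]
  ring

theorem partialFractionCoeff_insert_of_mem {s : Finset ι} {i j : ι} (hi : i ∉ s) (hj : j ∈ s)
    (v c : ι → F) :
    partialFractionCoeff (insert i s) v c j =
      partialFractionCoeff s v c j * ((v j - c i) / (v j - v i)) := by
  have hij : i ≠ j := fun h => hi (h ▸ hj)
  rw [partialFractionCoeff, partialFractionCoeff, prod_insert hi, erase_insert_of_ne hij,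
    prod_insert fun h => hi (mem_of_mem_erase h), mul_div_mul_comm, mul_comm]

theorem partialFractionCoeff_insert_self {s : Finset ι} {i : ι} (hi : i ∉ s) (v c : ι → F) :
    partialFractionCoeff (insert i s) v c i =
      (v i - c i) * ((∏ k ∈ s, (v i - c k)) / ∏ k ∈ s, (v i - v k)) := by
  rw [partialFractionCoeff, prod_insert hi, erase_insert hi, mul_div_assoc]

theorem partialFractionCoeff_map {κ : Type*} [DecidableEq κ] (s : Finset κ) (e : κ ↪ ι)
    (v c : ι → F) (j : κ) :
    partialFractionCoeff (s.map e) v c (e j) = partialFractionCoeff s (v ∘ e) (c ∘ e) j := by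
  rw [partialFractionCoeff, partialFractionCoeff, ← map_erase, prod_map, prod_map]
  rfl

end PartialFractions

theorem Fin.univ_eq_insert_last_map_castSuccEmb (n : ℕ) :
    (univ : Finset (Fin (n + 1))) = insert (Fin.last n) (univ.map Fin.castSuccEmb) := by
  rw [← Fin.Iio_last_eq_map, Finset.Iio_insert]
  ext j
  simp [Fin.le_last]

section PartialFractionsFin

variable {F : Type*} [Field F] {n : ℕ}

theorem partialFractionCoeff_univ_castSucc (v c : Fin (n + 1) → F) (j : Fin n) :
    partialFractionCoeff univ v c j.castSucc =
      partialFractionCoeff univ (v ∘ Fin.castSucc) (c ∘ Fin.castSucc) j *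
        ((v j.castSucc - c (Fin.last n)) / (v j.castSucc - v (Fin.last n))) := by
  rw [Fin.univ_eq_insert_last_map_castSuccEmb, partialFractionCoeff_insert_of_mem (by simp) (by simp),
    ← Fin.coe_castSuccEmb, partialFractionCoeff_map]

theorem partialFractionCoeff_univ_last {v : Fin (n + 1) → F} (hv : Function.Injective v)
    (c : Fin (n + 1) → F) :
    partialFractionCoeff univ v c (Fin.last n) = (v (Fin.last n) - c (Fin.last n)) *
      (1 + ∑ j : Fin n, partialFractionCoeff univ (v ∘ Fin.castSucc) (c ∘ Fin.castSucc) j /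
        (v (Fin.last n) - v j.castSucc)) := by
  rw [Fin.univ_eq_insert_last_map_castSuccEmb, partialFractionCoeff_insert_self (by simp),
    prod_map, prod_map]
  exact congrArg _ (prod_sub_div_prod_sub_eq_one_add_sum (hv.comp (Fin.castSucc_injective n)).injOn
    (c ∘ Fin.castSucc) fun j _ h => (Fin.castSucc_lt_last j).ne' (hv h))

end PartialFractionsFin

section ExpConv

open intervalIntegral

noncomputable def expConv (β : ℂ) (f : ℝ → ℂ) (t : ℝ) : ℂ :=
  ∫ τ in (0:ℝ)..t, exp (β * (t - τ)) * f τ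

theorem hasDerivAt_cexp_mul_ofReal (β : ℂ) (t : ℝ) :
    HasDerivAt (fun t : ℝ => exp (β * t)) (β * exp (β * t)) t := by
  simpa [mul_comm] using (((hasDerivAt_id (t : ℂ)).const_mul β).cexp).comp_ofReal

theorem expConv_eq_cexp_mul_integral (β : ℂ) (f : ℝ → ℂ) (t : ℝ) :
    expConv β f t = exp (β * t) * ∫ τ in (0:ℝ)..t, exp (-β * τ) * f τ := by
  rw [expConv, ← integral_const_mul]
  refine integral_congr fun τ _ => ?_
  simp only [← mul_assoc, ← exp_add]
  ring_nf

theorem expConv_apply_zero (β : ℂ) (f : ℝ → ℂ) : expConv β f 0 = 0 :=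
  integral_same

variable {f g : ℝ → ℂ}

theorem hasDerivAt_expConv (hf : Continuous f) (β : ℂ) (t : ℝ) :
    HasDerivAt (expConv β f) (β * expConv β f t + f t) t := by
  have hint : Continuous fun τ : ℝ => exp (-β * τ) * f τ := by fun_prop
  have hprod := (hasDerivAt_cexp_mul_ofReal β t).mul (hint.integral_hasStrictDerivAt 0 t).hasDerivAt
  rw [funext (expConv_eq_cexp_mul_integral β f)]
  refine hprod.congr_deriv ?_
  have hexp : exp (β * t) * exp (-β * t) = 1 := by rw [← exp_add]; simp
  linear_combination f t * hexp

theorem continuous_expConv (hf : Continuous f) (β : ℂ) : Continuous (expConv β f) :=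
  continuous_iff_continuousAt.2 fun t => (hasDerivAt_expConv hf β t).continuousAt

theorem eq_expConv_of_hasDerivAt {β : ℂ} {y : ℝ → ℂ} (hf : Continuous f)
    (hy : ∀ t, HasDerivAt y (β * y t + f t) t) (hy0 : y 0 = 0) : y = expConv β f := by
  set z : ℝ → ℂ := fun t => exp (-β * t) * (y t - expConv β f t)
  have hz : ∀ t, HasDerivAt z 0 t := fun t => by
    refine ((hasDerivAt_cexp_mul_ofReal (-β) t).mul
      ((hy t).sub (hasDerivAt_expConv hf β t))).congr_deriv ?_
    simp only [Pi.sub_apply]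
    ring
  funext t
  have hconst := is_const_of_deriv_eq_zero (fun t => (hz t).differentiableAt)
    (fun t => (hz t).deriv) t 0
  simpa [z, hy0, expConv_apply_zero, exp_ne_zero, sub_eq_zero] using hconst

-- Both sides solve `y' = β y + expConv γ f` with `y 0 = 0`.
theorem expConv_expConv (hf : Continuous f) {β γ : ℂ} (hβγ : β ≠ γ) (t : ℝ) :
    expConv β (expConv γ f) t = (expConv β f t - expConv γ f t) / (β - γ) := by
  have hsub : β - γ ≠ 0 := sub_ne_zero.mpr hβγ
  refine congrFun (eq_expConv_of_hasDerivAt (β := β)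
    (y := fun t => (expConv β f t - expConv γ f t) / (β - γ)) (continuous_expConv hf γ)
    (fun t => ?_) ?_).symm t
  · refine (((hasDerivAt_expConv hf β t).sub (hasDerivAt_expConv hf γ t)).div_const
      (β - γ)).congr_deriv ?_
    field_simp
    ring
  · simp [expConv_apply_zero]

theorem expConv_add (hf : Continuous f) (hg : Continuous g) (β : ℂ) (t : ℝ) :
    expConv β (fun τ => f τ + g τ) t = expConv β f t + expConv β g t := by
  simp only [expConv, mul_add]
  exact integral_add ((by fun_prop : Continuous _).intervalIntegrable _ _)
    ((by fun_prop : Continuous _).intervalIntegrable _ _)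

theorem expConv_const_mul (a β : ℂ) (t : ℝ) :
    expConv β (fun τ => a * f τ) t = a * expConv β f t := by
  simp only [expConv, ← integral_const_mul]
  exact integral_congr fun τ _ => by ring

theorem expConv_finsetSum {ι : Type*} (s : Finset ι) {g : ι → ℝ → ℂ}
    (hg : ∀ i ∈ s, Continuous (g i)) (β : ℂ) (t : ℝ) :
    expConv β (fun τ => ∑ i ∈ s, g i τ) t = ∑ i ∈ s, expConv β (g i) t := by
  simp only [expConv, mul_sum]
  exact integral_finsetSum fun i hi =>
    (by have := hg i hi; fun_prop : Continuous _).intervalIntegrable _ _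

end ExpConv

open Fin in
theorem eq_add_sum_partialFractionCoeff_mul_expConv {n : ℕ} (α : Fin n → ℂ)
    (hα : Function.Injective α) (ρ : ℂ) {f : ℝ → ℂ} (hf : Continuous f) (φ : ℕ → ℝ → ℂ)
    (hφ0 : φ 0 = f)
    (hφ : ∀ (j : Fin n) (t : ℝ),
      φ (j + 1) t = φ j t + (1 - 1 / ρ) * α j * expConv (α j) (φ j) t)
    (t : ℝ) :
    φ n t = f t + ∑ j, partialFractionCoeff univ α (fun k => α k / ρ) j * expConv (α j) f t := by
  induction n generalizing t with
  | zero => simp [hφ0]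
  | succ n ih =>
    induction α using Fin.snocCases with | snoc γ β => ?_
    obtain ⟨hγ, hβ⟩ := snoc_injective_iff.mp hα
    have hβγ : ∀ j, β ≠ γ j := fun j h => hβ ⟨j, h.symm⟩
    set A := partialFractionCoeff univ γ (fun k => γ k / ρ)
    have ihn : ∀ τ, φ n τ = f τ + ∑ j, A j * expConv (γ j) f τ :=
      ih γ hγ (fun j τ => by simpa using hφ j.castSucc τ)
    have hstep : φ (n + 1) t = φ n t + (1 - 1 / ρ) * β * expConv β (φ n) t := by
      simpa using hφ (last n) t
    have hconv : expConv β (φ n) t = expConv β f t +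
        ∑ j, A j * ((expConv β f t - expConv (γ j) f t) / (β - γ j)) := by
      have hterm : ∀ j, Continuous fun τ => A j * expConv (γ j) f τ := fun j =>
        continuous_const.mul (continuous_expConv hf _)
      rw [funext ihn, expConv_add hf (continuous_finsetSum _ fun j _ => hterm j),
        expConv_finsetSum _ fun j _ => hterm j]
      simp only [expConv_const_mul, expConv_expConv hf (hβγ _)]
    have hlast : partialFractionCoeff univ (snoc γ β : Fin (n + 1) → ℂ)
        (fun k => (snoc γ β : Fin (n + 1) → ℂ) k / ρ) (last n) =
          (β - β / ρ) * (1 + ∑ j, A j / (β - γ j)) := by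
      rw [partialFractionCoeff_univ_last hα]
      simp only [Function.comp_def, snoc_last, snoc_castSucc]
      rfl
    have hcoeffs : ∑ j, A j * expConv (γ j) f t + (1 - 1 / ρ) * β *
          ∑ j, A j * ((expConv β f t - expConv (γ j) f t) / (β - γ j)) =
        ∑ j, A j * ((γ j - β / ρ) / (γ j - β)) * expConv (γ j) f t +
          (β - β / ρ) * (∑ j, A j / (β - γ j)) * expConv β f t := by
      simp only [mul_sum, sum_mul, ← sum_add_distrib]
      refine sum_congr rfl fun j _ => ?_
      have h₁ : β - γ j ≠ 0 := sub_ne_zero.mpr (hβγ j)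
      have h₂ : γ j - β ≠ 0 := sub_ne_zero.mpr (hβγ j).symm
      field_simp
      ring
    rw [hstep, ihn, hconv, sum_univ_castSucc, hlast]
    simp only [partialFractionCoeff_univ_castSucc, Function.comp_def, snoc_castSucc, snoc_last]
    linear_combination hcoeffs

theorem recursion_eq_partial_fraction_general (n : ℕ) (α : Fin n → ℂ)
    (hα : Function.Injective α)
    (r : ℝ)
    (f : ℝ → ℂ) (hf : Continuous f)
    (φ : ℕ → ℝ → ℂ) (hφ0 : φ 0 = f)
    (hφ : ∀ (j : Fin n) (t : ℝ),
      φ (j + 1) t = φ j t + (1 - 1 / (r : ℂ)) * α j *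
        ∫ τ in (0:ℝ)..t, Complex.exp (α j * (t - τ)) * φ j τ)
    (a : Fin n → ℂ)
    (ha : ∀ j, a j = (∏ k, (α j - α k / (r : ℂ))) /
      (∏ k ∈ univ.erase j, (α j - α k))) :
    ∀ t : ℝ, 0 ≤ t →
      φ n t = f t + ∑ j, a j *
        ∫ τ in (0:ℝ)..t, Complex.exp (α j * (t - τ)) * f τ := by
  intro t _
  rw [eq_add_sum_partialFractionCoeff_mul_expConv α hα r hf φ hφ0 hφ t]
  exact congrArg _ (sum_congr rfl fun j _ => by rw [ha j]; rfl)

/-- Equivalence between the stable recursion (3.2.3) and the explicit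
partial-fraction formula (2.12): φₙ(t) = f(t) + ∑ⱼ aⱼ(r) ∫₀ᵗ e^{αⱼ(t−τ)}f(τ)dτ. -/
theorem recursion_eq_partial_fraction (n : ℕ) (α : Fin n → ℂ)
    (hα : Function.Injective α) (hαre : ∀ j, (α j).re < 0)
    (r : ℝ) (hr : 1 < r)
    (f : ℝ → ℂ) (hf : Continuous f) (M : ℝ)
    (hbd : ∀ t : ℝ, 0 ≤ t → ‖f t‖ ≤ M)
    (φ : ℕ → ℝ → ℂ) (hφ0 : φ 0 = f)
    (hφ : ∀ (j : Fin n) (t : ℝ),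
      φ (j + 1) t = φ j t + (1 - 1 / (r : ℂ)) * α j *
        ∫ τ in (0:ℝ)..t, Complex.exp (α j * (t - τ)) * φ j τ)
    (a : Fin n → ℂ)
    (ha : ∀ j, a j = (∏ k, (α j - α k / (r : ℂ))) /
      (∏ k ∈ univ.erase j, (α j - α k))) :
    ∀ t : ℝ, 0 ≤ t →
      φ n t = f t + ∑ j, a j *
        ∫ τ in (0:ℝ)..t, Complex.exp (α j * (t - τ)) * f τ :=
  recursion_eq_partial_fraction_general n α hα r f hf φ hφ0 hφ a ha
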